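/- arXiv:math/0202042 — 2 statements merged into one kernel-verified Lean document; each statement's English description precedes it below -/
import Mathlib

section
/- For pointed sets K and L and a commutative monoid A, there is a natural isomorphism of commutative monoids SP(K ∧ L, A) ≅ SP(K, SP(L, A)), where K ∧ L denotes the smash product of pointed sets. -/
/-- The generating relations for McCord's construction `SP(K,A)`:
(i) `*^a = 1`, (ii) `k^0 = 1`, (iii) `k^{a₁} k^{a₂} = k^{a₁+a₂}`,
imposed on the free commutative monoid `(K × A) →₀ ℕ` on the symbols `k^a`. -/
def SPRel (K A : Type*) [Inhabited K] [AddCommMonoid A] :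
    ((K × A) →₀ ℕ) → ((K × A) →₀ ℕ) → Prop := fun x y =>
  (∃ a : A, x = Finsupp.single (default, a) 1 ∧ y = 0) ∨
  (∃ k : K, x = Finsupp.single (k, (0 : A)) 1 ∧ y = 0) ∨
  (∃ (k : K) (a₁ a₂ : A),
      x = Finsupp.single (k, a₁) 1 + Finsupp.single (k, a₂) 1 ∧
      y = Finsupp.single (k, a₁ + a₂) 1)

/-- McCord's `SP(K,A)`: the commutative monoid presented by generators `k^a`
(`k ∈ K`, `a ∈ A`) and relations `*^a = 1`, `k^0 = 1`, `k^{a₁}k^{a₂} = k^{a₁+a₂}`. -/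
abbrev SP (K A : Type*) [Inhabited K] [AddCommMonoid A] :=
  (addConGen (SPRel K A)).Quotient

/-- The generator `k^a` of `SP(K,A)`. -/
noncomputable def SPgen (K A : Type*) [Inhabited K] [AddCommMonoid A] (k : K) (a : A) : SP K A :=
  (addConGen (SPRel K A)).mk' (Finsupp.single (k, a) 1)

/-- The relation collapsing the wedge `K ∨ L ⊆ K × L` to a point. -/
def SmashRel (K L : Type*) [Inhabited K] [Inhabited L] : K × L → K × L → Prop :=
  fun p q => (p.1 = default ∨ p.2 = default) ∧ (q.1 = default ∨ q.2 = default)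

/-- The smash product of pointed sets: the quotient of `K × L` collapsing `K ∨ L`. -/
def Smash (K L : Type*) [Inhabited K] [Inhabited L] := Quot (SmashRel K L)

instance (K L : Type*) [Inhabited K] [Inhabited L] : Inhabited (Smash K L) :=
  ⟨Quot.mk _ (default, default)⟩

/-!
Both sides are presented by generators whose relations say "additive in the exponent, trivial at
the basepoint". The assignment `(k ∧ l)^a ↦ k^{l^a}` respects the relations of
`SP(K ∧ L, A)` because `l^a` is additive in `a` and vanishes when `l = *`, while `k^x` is additive
in `x` and vanishes when `k = *`. Conversely, for fixed `k` the assignment `l^a ↦ (k ∧ l)^a` is a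
homomorphism `SP(L, A) → SP(K ∧ L, A)`, additive and vanishing at `k = *`, which yields the inverse.
That the two maps are mutually inverse is checked on generators.
-/

section

variable {K A : Type*} [Inhabited K] [AddCommMonoid A]

theorem SPRel.mk'_eq {x y : (K × A) →₀ ℕ} (h : SPRel K A x y) :
    (addConGen (SPRel K A)).mk' x = (addConGen (SPRel K A)).mk' y :=
  (AddCon.eq _).mpr (AddConGen.Rel.of _ _ h)

variable (K A)

theorem SPgen_default (a : A) : SPgen K A default a = 0 :=
  (SPRel.mk'_eq (Or.inl ⟨a, rfl, rfl⟩)).trans (map_zero _)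

theorem SPgen_zero (k : K) : SPgen K A k 0 = 0 :=
  (SPRel.mk'_eq (Or.inr (Or.inl ⟨k, rfl, rfl⟩))).trans (map_zero _)

theorem SPgen_add (k : K) (a₁ a₂ : A) :
    SPgen K A k (a₁ + a₂) = SPgen K A k a₁ + SPgen K A k a₂ :=
  ((map_add _ _ _).symm.trans (SPRel.mk'_eq (Or.inr (Or.inr ⟨k, a₁, a₂, rfl, rfl⟩)))).symm

end

namespace SP

variable (K A : Type*) {M : Type*} [Inhabited K] [AddCommMonoid A] [AddCommMonoid M]

noncomputable def genHom (k : K) : A →+ SP K A where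
  toFun := SPgen K A k
  map_zero' := SPgen_zero K A k
  map_add' := SPgen_add K A k

@[simp]
theorem genHom_apply (k : K) (a : A) : genHom K A k a = SPgen K A k a := rfl

theorem genHom_default : genHom K A default = 0 :=
  AddMonoidHom.ext (SPgen_default K A)

variable {K A}

noncomputable def lift (f : K → A →+ M) (hf : f default = 0) : SP K A →+ M :=
  AddCon.lift _ (Finsupp.liftAddHom fun p : K × A => multiplesHom M (f p.1 p.2)) <|
    AddCon.addConGen_le.mpr <| by
      rintro x y (⟨a, rfl, rfl⟩ | ⟨k, rfl, rfl⟩ | ⟨k, a₁, a₂, rfl, rfl⟩) <;>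
        simp [AddCon.ker_rel, hf]

@[simp]
theorem lift_SPgen (f : K → A →+ M) (hf : f default = 0) (k : K) (a : A) :
    lift f hf (SPgen K A k a) = f k a := by
  simp [lift, SPgen]

@[ext]
theorem hom_ext {φ ψ : SP K A →+ M} (h : ∀ k a, φ (SPgen K A k a) = ψ (SPgen K A k a)) :
    φ = ψ :=
  AddCon.hom_ext <| Finsupp.addHom_ext' fun p => AddMonoidHom.ext_nat (h p.1 p.2)

end SP

namespace Smash

variable {K L : Type*} [Inhabited K] [Inhabited L]

theorem mk_default_left (l : L) : (Quot.mk _ (default, l) : Smash K L) = (default : Smash K L) :=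
  Quot.sound ⟨Or.inl rfl, Or.inl rfl⟩

theorem mk_default_right (k : K) : (Quot.mk _ (k, default) : Smash K L) = (default : Smash K L) :=
  Quot.sound ⟨Or.inr rfl, Or.inl rfl⟩

end Smash

namespace SP

variable (K L A : Type*) [Inhabited K] [Inhabited L] [AddCommMonoid A]

theorem genHom_comp_genHom_of_wedge {k : K} {l : L} (h : k = default ∨ l = default) :
    (genHom K (SP L A) k).comp (genHom L A l) = 0 := by
  rcases h with rfl | rfl <;> simp [genHom_default]

noncomputable def smashCurry : SP (Smash K L) A →+ SP K (SP L A) :=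
  lift (Quot.lift (fun p => (genHom K (SP L A) p.1).comp (genHom L A p.2)) fun _ _ h =>
      (genHom_comp_genHom_of_wedge K L A h.1).trans (genHom_comp_genHom_of_wedge K L A h.2).symm)
    (genHom_comp_genHom_of_wedge K L A (Or.inl rfl))

@[simp]
theorem smashCurry_SPgen (k : K) (l : L) (a : A) :
    smashCurry K L A (SPgen (Smash K L) A (Quot.mk _ (k, l)) a) =
      SPgen K (SP L A) k (SPgen L A l a) :=
  lift_SPgen _ _ _ _

noncomputable def smashSlice (k : K) : SP L A →+ SP (Smash K L) A :=
  lift (fun l => genHom (Smash K L) A (Quot.mk _ (k, l))) <| by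
    rw [Smash.mk_default_right, genHom_default]

@[simp]
theorem smashSlice_SPgen (k : K) (l : L) (a : A) :
    smashSlice K L A k (SPgen L A l a) = SPgen (Smash K L) A (Quot.mk _ (k, l)) a :=
  lift_SPgen _ _ _ _

theorem smashSlice_default : smashSlice K L A default = 0 := by
  ext l a
  simp [Smash.mk_default_left, SPgen_default]

noncomputable def smashUncurry : SP K (SP L A) →+ SP (Smash K L) A :=
  lift (smashSlice K L A) (smashSlice_default K L A)

theorem smashCurry_comp_smashSlice (k : K) :
    (smashCurry K L A).comp (smashSlice K L A k) = genHom K (SP L A) k := by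
  ext l a
  simp

noncomputable def smashEquiv : SP (Smash K L) A ≃+ SP K (SP L A) :=
  (smashCurry K L A).toAddEquiv (smashUncurry K L A)
    (by
      ext s a
      induction s using Quot.ind with
      | mk p =>
        obtain ⟨k, l⟩ := p
        simp [smashUncurry])
    (by
      ext k x
      simpa [smashUncurry] using DFunLike.congr_fun (smashCurry_comp_smashSlice K L A k) x)

end SP

/-- McCord: there is a natural isomorphism of commutative monoids
`SP(K ∧ L, A) ≅ SP(K, SP(L, A))`, sending the generator `(k ∧ l)^a` to `k^{l^a}`. -/
theorem SP_smash_iso (K L A : Type*) [Inhabited K] [Inhabited L] [AddCommMonoid A] :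
    ∃ e : SP (Smash K L) A ≃+ SP K (SP L A),
      ∀ (k : K) (l : L) (a : A),
        e (SPgen (Smash K L) A (Quot.mk _ (k, l)) a) =
          SPgen K (SP L A) k (SPgen L A l a) :=
  ⟨SP.smashEquiv K L A, SP.smashCurry_SPgen K L A⟩
end

section
/- The assignment A ↦ A^× is a fully faithful functor from commutative monoids to functors Γ → Set: for commutative monoids A and B, natural transformations A^× → B^× correspond bijectively to monoid homomorphisms A → B. -/
/-- The map `Aⁿ → Aᵐ` induced by a based map `α : 𝐧 → 𝐦` of finite pointed sets
(`𝐧 = {0,1,…,n}` with basepoint `0`, modelled so that `Aⁿ` is indexed by `Fin n`,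
with `j : Fin n` corresponding to the element `j+1` of `𝐧`): the `i`-th component
of the image of `x` is the sum of the `x j` over all `j` with `α (j+1) = i+1`,
the empty sum being `0`. -/
def gammaMap {A : Type*} [AddCommMonoid A] {n m : ℕ}
    (α : Fin (n + 1) → Fin (m + 1)) (x : Fin n → A) : Fin m → A :=
  fun i => ∑ j : Fin n, if α j.succ = i.succ then x j else 0

/-!
A natural family `τ` is determined by its value on `A¹`: collapsing the non-basepoint elements
of a finite set `s ⊆ {1,…,n}` to `1 ∈ 𝟏` and the rest to the basepoint sends `x ∈ Aⁿ` to
`∑ j ∈ s, x j ∈ A¹`. Naturality along the collapse of a singleton `{i}` shows that `τ` acts on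
each coordinate by `f a := τ₁ a`, and along the collapse of everything (for `n = 0` and `n = 2`)
that `f` preserves `0` and `+`.
-/

open Finset

section

variable {A B : Type*} [AddCommMonoid A] [AddCommMonoid B]

theorem AddMonoidHom.gammaMap_comp (f : A →+ B) {n m : ℕ} (α : Fin (n + 1) → Fin (m + 1))
    (x : Fin n → A) : gammaMap α (fun j => f (x j)) = fun i => f (gammaMap α x i) := by
  funext i
  simp [gammaMap, map_sum, apply_ite f]

def collapseMap {n : ℕ} (s : Finset (Fin n)) : Fin (n + 1) → Fin 2 :=
  Fin.cases 0 fun j => if j ∈ s then 1 else 0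

theorem gammaMap_collapseMap {n : ℕ} (s : Finset (Fin n)) (x : Fin n → A) :
    gammaMap (collapseMap s) x = fun _ => ∑ j ∈ s, x j := by
  funext k
  simp [gammaMap, collapseMap, Fin.fin_one_eq_zero k, Finset.sum_ite_mem]

def IsGammaNatural (τ : ∀ n : ℕ, (Fin n → A) → (Fin n → B)) : Prop :=
  ∀ (n m : ℕ) (α : Fin (n + 1) → Fin (m + 1)), α 0 = 0 →
    ∀ x : Fin n → A, τ m (gammaMap α x) = gammaMap α (τ n x)

namespace IsGammaNatural

variable {τ : ∀ n : ℕ, (Fin n → A) → (Fin n → B)} (hτ : IsGammaNatural τ)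
include hτ

theorem apply_sum {n : ℕ} (x : Fin n → A) (s : Finset (Fin n)) :
    τ 1 (fun _ => ∑ j ∈ s, x j) 0 = ∑ j ∈ s, τ n x j := by
  have h := hτ n 1 (collapseMap s) rfl x
  rw [gammaMap_collapseMap, gammaMap_collapseMap] at h
  exact congrFun h 0

theorem apply_eq {n : ℕ} (x : Fin n → A) (i : Fin n) : τ n x i = τ 1 (fun _ => x i) 0 := by
  simpa using (hτ.apply_sum x {i}).symm

def toAddMonoidHom : A →+ B where
  toFun a := τ 1 (fun _ => a) 0
  map_zero' := by simpa using hτ.apply_sum (Fin.elim0 : Fin 0 → A) univ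
  map_add' a b := by
    have h := hτ.apply_sum ![a, b] univ
    rw [Fin.sum_univ_two, Fin.sum_univ_two, hτ.apply_eq ![a, b] 0, hτ.apply_eq ![a, b] 1] at h
    simpa using h

end IsGammaNatural

end

/-- The functor `A ↦ A^×` from commutative monoids to functors `Γ → Set` is fully
faithful: every monoid homomorphism `f : A → B` induces a natural transformation
`A^× → B^×` (applied componentwise), and conversely every natural family
`τ : A^× → B^×` (natural with respect to all based maps of finite pointed sets)
is induced by a unique monoid homomorphism. -/
theorem gammaFunctor_fully_faithful (A B : Type*) [AddCommMonoid A] [AddCommMonoid B] :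
    (∀ (f : A →+ B) (n m : ℕ) (α : Fin (n + 1) → Fin (m + 1)), α 0 = 0 →
      ∀ x : Fin n → A,
        gammaMap α (fun j => f (x j)) = fun i => f (gammaMap α x i)) ∧
    (∀ τ : ∀ n : ℕ, (Fin n → A) → (Fin n → B),
      (∀ (n m : ℕ) (α : Fin (n + 1) → Fin (m + 1)), α 0 = 0 →
        ∀ x : Fin n → A, τ m (gammaMap α x) = gammaMap α (τ n x)) →
      ∃! f : A →+ B, ∀ (n : ℕ) (x : Fin n → A) (i : Fin n), τ n x i = f (x i)) := by
  refine ⟨fun f n m α _ x => f.gammaMap_comp α x, fun τ hτ => ?_⟩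
  refine ⟨IsGammaNatural.toAddMonoidHom hτ, fun _ => IsGammaNatural.apply_eq hτ, fun g hg => ?_⟩
  exact AddMonoidHom.ext fun a => (hg 1 (fun _ => a) 0).symm
end
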